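/- For every weight vector (w_1, …, w_K) of real numbers with Σ_{k=1}^K w_k = 1, the convex/affine combination of the pattern-specific identifying functionals recovers the potential-outcome mean in the target population: Σ_{k=1}^K w_k · ψ_k(a) = E[Y_a | S = 0], where ψ_k(a) = Σ_x ℙ(π_k(Z) = x | S = 0) · E[Y | π_k(Z) = x, A = a, S ∈ 𝒮^k]. -/

import Mathlib

/-!
Each pattern-specific functional `ψ_k(a)` already equals `E[Y_a | S = 0]`, so every affine
combination of them does. Fix `z` with `ℙ(Z = z, S = 0) > 0`. The conditional law of `Y` given
`π_k Z = π_k z, A = a, S ∈ 𝒮^k` is, by (A6), its law given `Z = z, A = a, S ∈ 𝒮^k`; by (A1) this is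
the law of `Y_a`, by (A2) the event `A = a` can be dropped, and by (A4) (independence of `Y_a` from
each event `S = s` adds up to independence from `S ∈ 𝒮^k`) the conditioning on `S ∈ 𝒮^k` can be
traded for `S = 0`. Regrouping the sum over `x` along the fibres of `π_k` and applying the law of
total expectation in the target population gives `ψ_k(a) = E[Y_a | S = 0]`.
-/

open Finset

attribute [local instance] Classical.propDecidable

variable {Ω : Type*}

/-- Probability of an event. -/
noncomputable def pr [Fintype Ω] (P : Ω → ℝ) (E : Ω → Prop) : ℝ :=
  ∑ ω, if E ω then P ω else 0

/-- Expectation of a real random variable. -/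
noncomputable def ex [Fintype Ω] (P : Ω → ℝ) (Z : Ω → ℝ) : ℝ :=
  ∑ ω, P ω * Z ω

/-- Conditional probability ℙ(F | E) = ℙ(F ∩ E)/ℙ(E). -/
noncomputable def cpr [Fintype Ω] (P : Ω → ℝ) (F E : Ω → Prop) : ℝ :=
  pr P (fun ω => F ω ∧ E ω) / pr P E

/-- Conditional expectation E[Z | E] = E[Z·1_E]/ℙ(E). -/
noncomputable def cex [Fintype Ω] (P : Ω → ℝ) (Z : Ω → ℝ) (E : Ω → Prop) : ℝ :=
  (∑ ω, if E ω then P ω * Z ω else 0) / pr P E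

section Finite

variable [Fintype Ω] {P : Ω → ℝ}

lemma pr_nonneg (hP0 : ∀ ω, 0 ≤ P ω) (E : Ω → Prop) : 0 ≤ pr P E :=
  sum_nonneg fun ω _ => by by_cases hE : E ω <;> simp [hE, hP0 ω]

lemma pr_mono (hP0 : ∀ ω, 0 ≤ P ω) {E F : Ω → Prop} (h : ∀ ω, E ω → F ω) :
    pr P E ≤ pr P F :=
  sum_le_sum fun ω _ => by
    by_cases hE : E ω
    · simp [hE, h ω hE]
    · by_cases hF : F ω <;> simp [hE, hF, hP0 ω]

lemma pr_congr {E F : Ω → Prop} (h : ∀ ω, E ω ↔ F ω) : pr P E = pr P F :=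
  congrArg (pr P) (funext fun ω => propext (h ω))

lemma cpr_congr {F F' E E' : Ω → Prop} (hF : ∀ ω, E ω → (F ω ↔ F' ω))
    (hE : ∀ ω, E ω ↔ E' ω) : cpr P F E = cpr P F' E' := by
  unfold cpr
  congr 1 <;> refine pr_congr fun ω => ?_
  · have := hF ω; have := hE ω; tauto
  · exact hE ω

lemma cpr_and_mem_eq_sum {ι : Type*} (F : Ω → Prop) (V : Ω → ι) (T : Finset ι)
    (E : Ω → Prop) :
    cpr P (fun ω => F ω ∧ V ω ∈ T) E = ∑ s ∈ T, cpr P (fun ω => F ω ∧ V ω = s) E := by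
  simp only [cpr, pr, ← sum_div]
  rw [sum_comm]
  congr 1
  refine sum_congr rfl fun ω _ => ?_
  by_cases hF : F ω <;> by_cases hE : E ω <;> simp [hF, hE, sum_ite_eq]

lemma cpr_mem_eq_sum {ι : Type*} (V : Ω → ι) (T : Finset ι) (E : Ω → Prop) :
    cpr P (fun ω => V ω ∈ T) E = ∑ s ∈ T, cpr P (fun ω => V ω = s) E := by
  simpa using cpr_and_mem_eq_sum (P := P) (fun _ => True) V T E

lemma sum_cpr_comp_mul {𝒵 𝒳 : Type*} [Fintype 𝒵] [Fintype 𝒳] (Z : Ω → 𝒵) (f : 𝒵 → 𝒳)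
    (E : Ω → Prop) (g : 𝒳 → ℝ) :
    ∑ x, cpr P (fun ω => f (Z ω) = x) E * g x = ∑ z, cpr P (fun ω => Z ω = z) E * g (f z) := by
  have hfib : ∀ x, cpr P (fun ω => f (Z ω) = x) E
      = ∑ z ∈ univ with f z = x, cpr P (fun ω => Z ω = z) E := fun x => by
    rw [← cpr_mem_eq_sum]
    exact cpr_congr (fun ω _ => by simp) fun _ => Iff.rfl
  simp_rw [hfib, sum_mul]
  rw [← sum_fiberwise univ f]
  refine sum_congr rfl fun x _ => sum_congr rfl fun z hz => ?_
  rw [(mem_filter.1 hz).2]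

lemma cpr_and_eq_of_indep {F G E : Ω → Prop} (hE : pr P E ≠ 0)
    (hEG : pr P (fun ω => E ω ∧ G ω) ≠ 0)
    (h : cpr P (fun ω => F ω ∧ G ω) E = cpr P F E * cpr P G E) :
    cpr P F (fun ω => E ω ∧ G ω) = cpr P F E := by
  unfold cpr at *
  rw [pr_congr (fun ω => and_comm : ∀ ω, G ω ∧ E ω ↔ E ω ∧ G ω),
    pr_congr (fun ω => by tauto : ∀ ω, (F ω ∧ G ω) ∧ E ω ↔ F ω ∧ E ω ∧ G ω)] at h
  field_simp at h ⊢
  linear_combination h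

lemma cpr_and_mem_eq_mul_of_indep {ι : Type*} {F E : Ω → Prop} {V : Ω → ι} {T : Finset ι}
    (h : ∀ s ∈ T, cpr P (fun ω => F ω ∧ V ω = s) E = cpr P F E * cpr P (fun ω => V ω = s) E) :
    cpr P (fun ω => F ω ∧ V ω ∈ T) E = cpr P F E * cpr P (fun ω => V ω ∈ T) E := by
  rw [cpr_and_mem_eq_sum, cpr_mem_eq_sum, mul_sum]
  exact sum_congr rfl h

lemma sum_ite_mul_eq_zero (hP0 : ∀ ω, 0 ≤ P ω) {E : Ω → Prop} (h : pr P E = 0) (W : Ω → ℝ) :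
    (∑ ω, if E ω then P ω * W ω else 0) = 0 := by
  have hP : ∀ ω, E ω → P ω = 0 := fun ω hE => by
    have := (sum_eq_zero_iff_of_nonneg fun ω _ => ?_).1 h ω (mem_univ ω)
    · simpa [hE] using this
    · by_cases h : E ω <;> simp [h, hP0 ω]
  exact sum_eq_zero fun ω _ => by by_cases hE : E ω <;> simp [hE, hP ω]

lemma cex_eq_sum_cpr (W : Ω → ℝ) (E : Ω → Prop) {T : Finset ℝ} (hT : ∀ ω, W ω ∈ T) :
    cex P W E = ∑ y ∈ T, y * cpr P (fun ω => W ω = y) E := by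
  simp only [cex, cpr, pr, mul_div_assoc', ← sum_div, mul_sum]
  rw [sum_comm]
  congr 1
  refine sum_congr rfl fun ω _ => ?_
  by_cases hE : E ω <;> simp [hE, hT ω, mul_comm]

lemma cex_congr_of_cpr_eq {W W' : Ω → ℝ} {E E' : Ω → Prop}
    (h : ∀ y, cpr P (fun ω => W ω = y) E = cpr P (fun ω => W' ω = y) E') :
    cex P W E = cex P W' E' := by
  let T := univ.image W ∪ univ.image W'
  rw [cex_eq_sum_cpr W E (T := T) fun ω => mem_union_left _ (mem_image_of_mem W (mem_univ ω)),
    cex_eq_sum_cpr W' E' (T := T) fun ω => mem_union_right _ (mem_image_of_mem W' (mem_univ ω))]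
  simp_rw [h]

lemma cex_mul_pr (hP0 : ∀ ω, 0 ≤ P ω) (W : Ω → ℝ) (E : Ω → Prop) :
    cex P W E * pr P E = ∑ ω, if E ω then P ω * W ω else 0 := by
  by_cases h : pr P E = 0
  · rw [h, mul_zero, sum_ite_mul_eq_zero hP0 h]
  · exact div_mul_cancel₀ _ h

lemma cex_eq_sum_cpr_mul_cex (hP0 : ∀ ω, 0 ≤ P ω) {𝒵 : Type*} [Fintype 𝒵] (Z : Ω → 𝒵)
    (W : Ω → ℝ) (E : Ω → Prop) :
    cex P W E = ∑ z, cpr P (fun ω => Z ω = z) E * cex P W (fun ω => Z ω = z ∧ E ω) := by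
  have hz : ∀ z, cpr P (fun ω => Z ω = z) E * cex P W (fun ω => Z ω = z ∧ E ω)
      = cex P W (fun ω => Z ω = z ∧ E ω) * pr P (fun ω => Z ω = z ∧ E ω) / pr P E :=
    fun z => by rw [cpr]; ring
  simp only [hz, cex_mul_pr hP0, ← sum_div]
  rw [cex, sum_comm]
  congr 1
  refine sum_congr rfl fun ω _ => ?_
  by_cases hE : E ω <;> simp [hE]

end Finite

section Identification

variable [Fintype Ω] {P : Ω → ℝ} {𝒵 𝒳 σ 𝒯 : Type*} {S : Ω → σ} {T : Finset σ} {s₀ : σ}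
  {Z : Ω → 𝒵} {π : 𝒵 → 𝒳} {A : Ω → 𝒯} {a : 𝒯} {Y Ya : Ω → ℝ}

lemma cpr_outcome_eq_cpr_potential_outcome_target (hP0 : ∀ ω, 0 ≤ P ω)
    (hA1 : ∀ ω, A ω = a → Y ω = Ya ω)
    (hA2 : ∀ z a' y, 0 < pr P (fun ω => Z ω = z ∧ S ω ∈ T) →
      cpr P (fun ω => Ya ω = y ∧ A ω = a') (fun ω => Z ω = z ∧ S ω ∈ T)
        = cpr P (fun ω => Ya ω = y) (fun ω => Z ω = z ∧ S ω ∈ T)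
          * cpr P (fun ω => A ω = a') (fun ω => Z ω = z ∧ S ω ∈ T))
    (hA4 : ∀ z s y, 0 < pr P (fun ω => Z ω = z) →
      cpr P (fun ω => Ya ω = y ∧ S ω = s) (fun ω => Z ω = z)
        = cpr P (fun ω => Ya ω = y) (fun ω => Z ω = z)
          * cpr P (fun ω => S ω = s) (fun ω => Z ω = z))
    (hA6 : ∀ x, 0 < pr P (fun ω => π (Z ω) = x ∧ S ω ∈ T ∧ A ω = a) →
      ∀ z, π z = x → 0 < pr P (fun ω => Z ω = z ∧ S ω ∈ T ∧ A ω = a) →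
      ∀ y, cpr P (fun ω => Y ω = y) (fun ω => Z ω = z ∧ S ω ∈ T ∧ A ω = a)
        = cpr P (fun ω => Y ω = y) (fun ω => π (Z ω) = x ∧ S ω ∈ T ∧ A ω = a))
    {z : 𝒵} (hz : 0 < pr P (fun ω => Z ω = z ∧ S ω = s₀))
    (hza : 0 < pr P (fun ω => A ω = a ∧ Z ω = z ∧ S ω ∈ T)) (y : ℝ) :
    cpr P (fun ω => Y ω = y) (fun ω => π (Z ω) = π z ∧ A ω = a ∧ S ω ∈ T)
      = cpr P (fun ω => Ya ω = y) (fun ω => Z ω = z ∧ S ω = s₀) := by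
  have hzTa : 0 < pr P (fun ω => (Z ω = z ∧ S ω ∈ T) ∧ A ω = a) :=
    hza.trans_le (pr_mono hP0 fun ω h => ⟨⟨h.2.1, h.2.2⟩, h.1⟩)
  have hzTa' : 0 < pr P (fun ω => Z ω = z ∧ S ω ∈ T ∧ A ω = a) :=
    hzTa.trans_le (pr_mono hP0 fun ω h => ⟨h.1.1, h.1.2, h.2⟩)
  have hxTa : 0 < pr P (fun ω => π (Z ω) = π z ∧ S ω ∈ T ∧ A ω = a) :=
    hzTa'.trans_le (pr_mono hP0 fun ω h => ⟨congrArg π h.1, h.2⟩)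
  have hzT : 0 < pr P (fun ω => Z ω = z ∧ S ω ∈ T) :=
    hzTa.trans_le (pr_mono hP0 fun ω h => h.1)
  have hZ : 0 < pr P (fun ω => Z ω = z) := hz.trans_le (pr_mono hP0 fun ω h => h.1)
  calc cpr P (fun ω => Y ω = y) (fun ω => π (Z ω) = π z ∧ A ω = a ∧ S ω ∈ T)
      = cpr P (fun ω => Y ω = y) (fun ω => π (Z ω) = π z ∧ S ω ∈ T ∧ A ω = a) :=
        cpr_congr (fun _ _ => Iff.rfl) fun ω => by tauto
    _ = cpr P (fun ω => Y ω = y) (fun ω => Z ω = z ∧ S ω ∈ T ∧ A ω = a) :=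
        (hA6 _ hxTa z rfl hzTa' y).symm
    _ = cpr P (fun ω => Ya ω = y) (fun ω => (Z ω = z ∧ S ω ∈ T) ∧ A ω = a) :=
        cpr_congr (fun ω h => by rw [hA1 ω h.2.2]) fun ω => and_assoc.symm
    _ = cpr P (fun ω => Ya ω = y) (fun ω => Z ω = z ∧ S ω ∈ T) :=
        cpr_and_eq_of_indep hzT.ne' hzTa.ne' (hA2 z a y hzT)
    _ = cpr P (fun ω => Ya ω = y) (fun ω => Z ω = z) :=
        cpr_and_eq_of_indep hZ.ne' hzT.ne'
          (cpr_and_mem_eq_mul_of_indep fun s _ => hA4 z s y hZ)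
    _ = cpr P (fun ω => Ya ω = y) (fun ω => Z ω = z ∧ S ω = s₀) :=
        (cpr_and_eq_of_indep hZ.ne' hz.ne' (hA4 z s₀ y hZ)).symm

variable [Fintype 𝒳]

/-- The functional `ψ_k(a)` of a missingness pattern whose trials form `T` and whose observed
covariates are `π Z`; `s₀` labels the target population. -/
noncomputable def identifyingFunctional (P : Ω → ℝ) (S : Ω → σ) (T : Finset σ) (s₀ : σ)
    (Z : Ω → 𝒵) (π : 𝒵 → 𝒳) (A : Ω → 𝒯) (a : 𝒯) (Y : Ω → ℝ) : ℝ :=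
  ∑ x, cpr P (fun ω => π (Z ω) = x) (fun ω => S ω = s₀)
    * cex P Y (fun ω => π (Z ω) = x ∧ A ω = a ∧ S ω ∈ T)

theorem identifyingFunctional_eq_cex_target [Fintype 𝒵] (hP0 : ∀ ω, 0 ≤ P ω)
    (hA1 : ∀ ω, A ω = a → Y ω = Ya ω)
    (hA2 : ∀ z a' y, 0 < pr P (fun ω => Z ω = z ∧ S ω ∈ T) →
      cpr P (fun ω => Ya ω = y ∧ A ω = a') (fun ω => Z ω = z ∧ S ω ∈ T)
        = cpr P (fun ω => Ya ω = y) (fun ω => Z ω = z ∧ S ω ∈ T)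
          * cpr P (fun ω => A ω = a') (fun ω => Z ω = z ∧ S ω ∈ T))
    (hA4 : ∀ z s y, 0 < pr P (fun ω => Z ω = z) →
      cpr P (fun ω => Ya ω = y ∧ S ω = s) (fun ω => Z ω = z)
        = cpr P (fun ω => Ya ω = y) (fun ω => Z ω = z)
          * cpr P (fun ω => S ω = s) (fun ω => Z ω = z))
    (hA6 : ∀ x, 0 < pr P (fun ω => π (Z ω) = x ∧ S ω ∈ T ∧ A ω = a) →
      ∀ z, π z = x → 0 < pr P (fun ω => Z ω = z ∧ S ω ∈ T ∧ A ω = a) →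
      ∀ y, cpr P (fun ω => Y ω = y) (fun ω => Z ω = z ∧ S ω ∈ T ∧ A ω = a)
        = cpr P (fun ω => Y ω = y) (fun ω => π (Z ω) = x ∧ S ω ∈ T ∧ A ω = a))
    (hpos : ∀ z, 0 < pr P (fun ω => Z ω = z ∧ S ω = s₀) →
      0 < pr P (fun ω => A ω = a ∧ Z ω = z ∧ S ω ∈ T)) :
    identifyingFunctional P S T s₀ Z π A a Y = cex P Ya (fun ω => S ω = s₀) := by
  rw [identifyingFunctional, sum_cpr_comp_mul Z π _
    (fun x => cex P Y (fun ω => π (Z ω) = x ∧ A ω = a ∧ S ω ∈ T)), cex_eq_sum_cpr_mul_cex hP0 Z]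
  refine sum_congr rfl fun z _ => ?_
  obtain hz | hz := (pr_nonneg hP0 fun ω => Z ω = z ∧ S ω = s₀).eq_or_lt
  · simp [cpr, ← hz]
  · exact congrArg _ (cex_congr_of_cpr_eq
      (cpr_outcome_eq_cpr_potential_outcome_target hP0 hA1 hA2 hA4 hA6 hz (hpos z hz)))

end Identification

theorem weighted_combination_identification_general
    {𝒵 𝒯 : Type*} [Fintype Ω] [Fintype 𝒵]
    (L K : ℕ) (𝒳 : Fin K → Type*) [∀ k, Fintype (𝒳 k)]
    (P : Ω → ℝ) (hP0 : ∀ ω, 0 ≤ P ω)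
    (S : Ω → Fin (L + 1)) (𝒮 : Fin K → Finset (Fin (L + 1)))
    (Z : Ω → 𝒵) (π : ∀ k, 𝒵 → 𝒳 k)
    (A : Ω → 𝒯) (a : 𝒯) (Y Ya : Ω → ℝ)
    -- (A1) consistency
    (hA1 : ∀ ω, A ω = a → Y ω = Ya ω)
    -- (A2) within-pattern exchangeability over treatment
    (hA2 : ∀ k : Fin K, ∀ z a' y, 0 < pr P (fun ω => Z ω = z ∧ S ω ∈ 𝒮 k) →
      cpr P (fun ω => Ya ω = y ∧ A ω = a') (fun ω => Z ω = z ∧ S ω ∈ 𝒮 k)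
        = cpr P (fun ω => Ya ω = y) (fun ω => Z ω = z ∧ S ω ∈ 𝒮 k)
          * cpr P (fun ω => A ω = a') (fun ω => Z ω = z ∧ S ω ∈ 𝒮 k))
    -- (A4) transportability
    (hA4 : ∀ z s y, 0 < pr P (fun ω => Z ω = z) →
      cpr P (fun ω => Ya ω = y ∧ S ω = s) (fun ω => Z ω = z)
        = cpr P (fun ω => Ya ω = y) (fun ω => Z ω = z)
          * cpr P (fun ω => S ω = s) (fun ω => Z ω = z))
    -- (A6) outcome independent of the pattern-k missing covariates
    (hA6 : ∀ k : Fin K, ∀ x : 𝒳 k,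
      0 < pr P (fun ω => π k (Z ω) = x ∧ S ω ∈ 𝒮 k ∧ A ω = a) →
      ∀ z, π k z = x → 0 < pr P (fun ω => Z ω = z ∧ S ω ∈ 𝒮 k ∧ A ω = a) →
      ∀ y, cpr P (fun ω => Y ω = y) (fun ω => Z ω = z ∧ S ω ∈ 𝒮 k ∧ A ω = a)
        = cpr P (fun ω => Y ω = y) (fun ω => π k (Z ω) = x ∧ S ω ∈ 𝒮 k ∧ A ω = a))
    -- positivity
    (hpos : ∀ k : Fin K, ∀ z, 0 < pr P (fun ω => Z ω = z ∧ S ω = 0) →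
      0 < pr P (fun ω => A ω = a ∧ Z ω = z ∧ S ω ∈ 𝒮 k))
    -- weights summing to one
    (w : Fin K → ℝ) (hw : ∑ k, w k = 1) :
    ∑ k, w k *
        (∑ x : 𝒳 k,
          cpr P (fun ω => π k (Z ω) = x) (fun ω => S ω = 0)
            * cex P Y (fun ω => π k (Z ω) = x ∧ A ω = a ∧ S ω ∈ 𝒮 k))
      = cex P Ya (fun ω => S ω = 0) := by
  have hψ : ∀ k, identifyingFunctional P S (𝒮 k) 0 Z (π k) A a Y = cex P Ya (fun ω => S ω = 0) :=
    fun k => identifyingFunctional_eq_cex_target hP0 hA1 (hA2 k) hA4 (hA6 k) (hpos k)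
  change ∑ k, w k * identifyingFunctional P S (𝒮 k) 0 Z (π k) A a Y = _
  rw [sum_congr rfl fun k _ => congrArg (w k * ·) (hψ k), ← sum_mul, hw, one_mul]

/-- Any affine combination (weights summing to one) of the pattern-specific
identifying functionals recovers the potential-outcome mean in the target population. -/
theorem weighted_combination_identification
    {𝒵 𝒯 : Type*} [Fintype Ω] [Fintype 𝒵] [Fintype 𝒯]
    (L K : ℕ) (𝒳 : Fin K → Type*) [∀ k, Fintype (𝒳 k)]
    (P : Ω → ℝ) (hP0 : ∀ ω, 0 ≤ P ω) (hP1 : ∑ ω, P ω = 1)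
    (S : Ω → Fin (L + 1)) (𝒮 : Fin K → Finset (Fin (L + 1)))
    -- the patterns partition the trials 1, …, L
    (h𝒮ne : ∀ k, (𝒮 k).Nonempty)
    (h𝒮0 : ∀ k, (0 : Fin (L + 1)) ∉ 𝒮 k)
    (h𝒮disj : ∀ k j, k ≠ j → Disjoint (𝒮 k) (𝒮 j))
    (h𝒮union : ∀ s : Fin (L + 1), s ≠ 0 → ∃ k, s ∈ 𝒮 k)
    (Z : Ω → 𝒵) (π : ∀ k, 𝒵 → 𝒳 k)
    (A : Ω → 𝒯) (a : 𝒯) (Y Ya : Ω → ℝ)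
    -- (A1) consistency
    (hA1 : ∀ ω, A ω = a → Y ω = Ya ω)
    -- (A2) within-pattern exchangeability over treatment
    (hA2 : ∀ k : Fin K, ∀ z a' y, 0 < pr P (fun ω => Z ω = z ∧ S ω ∈ 𝒮 k) →
      cpr P (fun ω => Ya ω = y ∧ A ω = a') (fun ω => Z ω = z ∧ S ω ∈ 𝒮 k)
        = cpr P (fun ω => Ya ω = y) (fun ω => Z ω = z ∧ S ω ∈ 𝒮 k)
          * cpr P (fun ω => A ω = a') (fun ω => Z ω = z ∧ S ω ∈ 𝒮 k))
    -- (A4) transportability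
    (hA4 : ∀ z s y, 0 < pr P (fun ω => Z ω = z) →
      cpr P (fun ω => Ya ω = y ∧ S ω = s) (fun ω => Z ω = z)
        = cpr P (fun ω => Ya ω = y) (fun ω => Z ω = z)
          * cpr P (fun ω => S ω = s) (fun ω => Z ω = z))
    -- (A6) outcome independent of the pattern-k missing covariates
    (hA6 : ∀ k : Fin K, ∀ x : 𝒳 k,
      0 < pr P (fun ω => π k (Z ω) = x ∧ S ω ∈ 𝒮 k ∧ A ω = a) →
      ∀ z, π k z = x → 0 < pr P (fun ω => Z ω = z ∧ S ω ∈ 𝒮 k ∧ A ω = a) →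
      ∀ y, cpr P (fun ω => Y ω = y) (fun ω => Z ω = z ∧ S ω ∈ 𝒮 k ∧ A ω = a)
        = cpr P (fun ω => Y ω = y) (fun ω => π k (Z ω) = x ∧ S ω ∈ 𝒮 k ∧ A ω = a))
    -- positivity
    (hposT : 0 < pr P (fun ω => S ω = 0))
    (hpos : ∀ k : Fin K, ∀ z, 0 < pr P (fun ω => Z ω = z ∧ S ω = 0) →
      0 < pr P (fun ω => A ω = a ∧ Z ω = z ∧ S ω ∈ 𝒮 k))
    -- weights summing to one
    (w : Fin K → ℝ) (hw : ∑ k, w k = 1) :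
    ∑ k, w k *
        (∑ x : 𝒳 k,
          cpr P (fun ω => π k (Z ω) = x) (fun ω => S ω = 0)
            * cex P Y (fun ω => π k (Z ω) = x ∧ A ω = a ∧ S ω ∈ 𝒮 k))
      = cex P Ya (fun ω => S ω = 0) :=
  weighted_combination_identification_general L K 𝒳 P hP0 S 𝒮 Z π A a Y Ya hA1 hA2 hA4 hA6 hpos w hw
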